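/- Let α > 0, η ∈ ℝ, and k ≠ 0, and let g be the SGED density: g(x) = exp(−(1/2)·(−(1/k)·log(1 − k(x−η)/α))²) / (√(2π)·α·(1 − k(x−η)/α)), supported on x < η + α/k when k > 0 and on x > η + α/k when k < 0. Then the moment generating function of the SGED fails to exist off one side of the origin: if k < 0, then for every t > 0 the integral ∫ e^{tx} g(x) dx over the support diverges; and if k > 0, then for every t < 0 the integral ∫ e^{tx} g(x) dx over the support diverges. -/

import Mathlib

/-!
Put `u = 1 - k (x - η) / α`, which tends to `+∞` at the unbounded end of the support. There
`e^{t x} = e^{s u + d}` with `s = -t α / k`, positive when `t` and `k` have opposite signs,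
while the density only decays like `exp (-(log u)² / (2 k²)) / u`. Since `(log u)² = o(u)`, the
integrand tends to `+∞`, and a function bounded below by `1` on a half-line is not integrable.
-/

open MeasureTheory

/-- Density of the skewed generalized error distribution (SGED) with skewness `k ≠ 0`,
scale `α > 0` and location `η`:
`g(x) = exp(−(1/2)(−(1/k) log(1 − k(x−η)/α))²) / (√(2π) α (1 − k(x−η)/α))`. -/
noncomputable def sgedDensity (α η k x : ℝ) : ℝ :=
  Real.exp (-(1 / 2) * (-(1 / k) * Real.log (1 - k * (x - η) / α)) ^ 2) /
    (Real.sqrt (2 * Real.pi) * α * (1 - k * (x - η) / α))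

open Filter Set Real

theorem not_integrableOn_of_one_le {X : Type*} [MeasurableSpace X] {μ : Measure X} {s : Set X}
    {f : X → ℝ} (hμ : μ s = ⊤) (hs : MeasurableSet s)
    (hf : ∀ x ∈ s, 1 ≤ f x) : ¬ IntegrableOn f s μ := by
  intro hint
  have hone : IntegrableOn (fun _ => (1 : ℝ)) s μ :=
    hint.mono' aestronglyMeasurable_const <| (ae_restrict_iff' hs).2 <|
      .of_forall fun x hx => by simpa using hf x hx
  simp [hμ] at hone

theorem not_integrableOn_Ioi_of_tendsto_atTop {f : ℝ → ℝ} (hf : Tendsto f atTop atTop)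
    (a : ℝ) : ¬ IntegrableOn f (Ioi a) := by
  obtain ⟨b, hb⟩ := eventually_atTop.mp (hf.eventually_ge_atTop 1)
  refine fun h => not_integrableOn_of_one_le (s := Ioi (max a b)) (by simp)
    measurableSet_Ioi (fun x hx => hb x ?_) (h.mono_set (Ioi_subset_Ioi (le_max_left a b)))
  exact (le_max_right a b).trans (mem_Ioi.1 hx).le

theorem not_integrableOn_Iio_of_tendsto_atBot {f : ℝ → ℝ} (hf : Tendsto f atBot atTop)
    (a : ℝ) : ¬ IntegrableOn f (Iio a) := by
  obtain ⟨b, hb⟩ := eventually_atBot.mp (hf.eventually_ge_atTop 1)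
  refine fun h => not_integrableOn_of_one_le (s := Iio (min a b)) (by simp)
    measurableSet_Iio (fun x hx => hb x ?_) (h.mono_set (Iio_subset_Iio (min_le_left a b)))
  exact (mem_Iio.1 hx).le.trans (min_le_right a b)

theorem tendsto_mul_sub_log_sq_sub_log_atTop {s : ℝ} (hs : 0 < s) (K : ℝ) :
    Tendsto (fun y => s * y - K * log y ^ 2 - log y) atTop atTop := by
  have hlog_sq : Tendsto (fun y => log y ^ 2 / y) atTop (nhds 0) := by
    simpa using tendsto_pow_log_div_mul_add_atTop 1 0 2 one_ne_zero
  have hlog : Tendsto (fun y => log y / y) atTop (nhds 0) := by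
    simpa using tendsto_pow_log_div_mul_add_atTop 1 0 1 one_ne_zero
  have hcoeff : Tendsto (fun y => s - K * (log y ^ 2 / y) - log y / y) atTop (nhds s) := by
    simpa using (tendsto_const_nhds.sub (hlog_sq.const_mul K)).sub hlog
  refine (hcoeff.pos_mul_atTop hs tendsto_id).congr' ?_
  filter_upwards [eventually_gt_atTop 0] with y hy
  rw [id]
  field_simp

theorem exp_mul_sgedDensity {α η k x : ℝ} (hα : α ≠ 0) (hk : k ≠ 0) (t : ℝ)
    (hu : 0 < 1 - k * (x - η) / α) :
    exp (t * x) * sgedDensity α η k x =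
      exp (-(t * α / k) * (1 - k * (x - η) / α) + t * (α + k * η) / k
        - 1 / (2 * k ^ 2) * log (1 - k * (x - η) / α) ^ 2
        - log (1 - k * (x - η) / α)) / (sqrt (2 * π) * α) := by
  set u := 1 - k * (x - η) / α with hu_def
  have htx : t * x = -(t * α / k) * u + t * (α + k * η) / k := by
    rw [hu_def]; field_simp; ring
  have hsq : -(1 / 2) * (-(1 / k) * log u) ^ 2 = -(1 / (2 * k ^ 2) * log u ^ 2) := by
    field_simp
  rw [sgedDensity, ← hu_def, htx, hsq, exp_add, exp_neg]
  conv_rhs => rw [sub_eq_add_neg _ (log u), exp_add, exp_neg, exp_log hu, sub_eq_add_neg,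
    exp_add, exp_add, exp_neg]
  field_simp

theorem tendsto_exp_mul_sgedDensity {α η k t : ℝ} (hα : 0 < α) (hk : k ≠ 0)
    (hs : 0 < -(t * α / k)) {l : Filter ℝ}
    (hu : Tendsto (fun x => 1 - k * (x - η) / α) l atTop) :
    Tendsto (fun x => exp (t * x) * sgedDensity α η k x) l atTop := by
  have hC : 0 < sqrt (2 * π) * α := by positivity
  have hexp := tendsto_exp_atTop.comp <| tendsto_atTop_add_const_right _ (t * (α + k * η) / k)
    (tendsto_mul_sub_log_sq_sub_log_atTop hs (1 / (2 * k ^ 2)))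
  refine ((hexp.atTop_div_const hC).comp hu).congr' ?_
  filter_upwards [hu.eventually_gt_atTop 0] with x hx
  rw [exp_mul_sgedDensity hα.ne' hk t hx]
  simp only [Function.comp_apply]
  ring_nf

/-- The moment generating function of the SGED fails to exist off one side of the origin:
for `k < 0` the integral `∫ e^{tx} g(x) dx` over the support `(η + α/k, ∞)` diverges for
every `t > 0`, and for `k > 0` it diverges over the support `(−∞, η + α/k)` for every
`t < 0`. -/
theorem sged_mgf_not_exists
    (α η k : ℝ) (hα : 0 < α) (hk : k ≠ 0) :
    (k < 0 → ∀ t : ℝ, 0 < t →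
      ¬ IntegrableOn (fun x => Real.exp (t * x) * sgedDensity α η k x)
        (Set.Ioi (η + α / k)) volume) ∧
    (0 < k → ∀ t : ℝ, t < 0 →
      ¬ IntegrableOn (fun x => Real.exp (t * x) * sgedDensity α η k x)
        (Set.Iio (η + α / k)) volume) := by
  have hu_eq : (fun x => 1 - k * (x - η) / α) = fun x => -k / α * x + (1 + k * η / α) := by
    ext x; field_simp; ring
  refine ⟨fun hk_neg t ht => ?_, fun hk_pos t ht => ?_⟩
  · have hu : Tendsto (fun x => 1 - k * (x - η) / α) atTop atTop := by
      rw [hu_eq]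
      exact tendsto_atTop_add_const_right _ _
        (tendsto_id.const_mul_atTop (div_pos (neg_pos.2 hk_neg) hα))
    have hs : 0 < -(t * α / k) := by
      rw [neg_pos]; exact div_neg_of_pos_of_neg (mul_pos ht hα) hk_neg
    exact not_integrableOn_Ioi_of_tendsto_atTop (tendsto_exp_mul_sgedDensity hα hk hs hu) _
  · have hu : Tendsto (fun x => 1 - k * (x - η) / α) atBot atTop := by
      rw [hu_eq]
      exact tendsto_atTop_add_const_right _ _ (tendsto_id.const_mul_atBot_of_neg
        (div_neg_of_neg_of_pos (neg_neg_iff_pos.2 hk_pos) hα))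
    have hs : 0 < -(t * α / k) := by
      rw [neg_pos]; exact div_neg_of_neg_of_pos (mul_neg_of_neg_of_pos ht hα) hk_pos
    exact not_integrableOn_Iio_of_tendsto_atBot (tendsto_exp_mul_sgedDensity hα hk hs hu) _
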